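/- arXiv:2007.11846 — 4 statements merged into one kernel-verified Lean document; each statement's English description precedes it below -/
import Mathlib

section
/- Let M = [[A, b],[bᵀ, c]] be a real symmetric positive semidefinite (n+1)×(n+1) matrix, where A is a real symmetric n×n matrix, b ∈ ℝⁿ and c ∈ ℝ. Then rank M = rank A if and only if the generalized Schur complement M/A = c − bᵀ A⁺ b equals 0; otherwise rank M = rank A + 1. -/
open Matrix MeasureTheory

noncomputable section

attribute [local instance] Classical.propDecidable

/-- Hankel matrix of the sequence `(β a, β (a+1), …, β (a+2m))`. -/
def Hmat (β : ℕ → ℝ) (a m : ℕ) : Matrix (Fin (m + 1)) (Fin (m + 1)) ℝ :=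
  Matrix.of fun i j => β (a + i + j)

/-- `j`-th column of the Hankel matrix of `(β a, …, β (a+2m))`. -/
def Hcol (β : ℕ → ℝ) (a m : ℕ) (j : ℕ) : Fin (m + 1) → ℝ := fun ℓ => β (a + j + ℓ)

/-- The rank of the sequence `(β a, …, β (a+2m))`. -/
def seqRank (β : ℕ → ℝ) (a m : ℕ) : ℕ :=
  if IsUnit (Hmat β a m).det then m + 1
  else sInf {i : ℕ | Hcol β a m i ∈ Submodule.span ℝ (Hcol β a m '' Set.Iio i)}

/-- Moore–Penrose pseudoinverse of a real matrix. -/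
def pinv {n m : Type*} [Fintype n] [Fintype m] (A : Matrix n m ℝ) : Matrix m n ℝ :=
  if h : ∃ B : Matrix m n ℝ,
      A * B * A = A ∧ B * A * B = B ∧ (A * B)ᵀ = A * B ∧ (B * A)ᵀ = B * A
  then h.choose else 0

/-- `μ` is a representing measure on `ℝ` for the sequence `(β 0, …, β n)`. -/
def IsRepMeas (β : ℕ → ℝ) (n : ℕ) (μ : Measure ℝ) : Prop :=
  (∀ i ≤ n, Integrable (fun x : ℝ => x ^ i) μ) ∧ (∀ i ≤ n, β i = ∫ x : ℝ, x ^ i ∂μ)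

/-- `μ` is an `r`-atomic measure. -/
def IsAtomicM {α : Type*} [MeasurableSpace α] (μ : Measure α) (r : ℕ) : Prop :=
  ∃ (x : Fin r → α) (c : Fin r → ℝ), Function.Injective x ∧ (∀ ℓ, 0 < c ℓ) ∧
    μ = ∑ ℓ : Fin r, (ENNReal.ofReal (c ℓ)) • Measure.dirac (x ℓ)

/-- `(β 0, …, β n)` has a representing measure on `ℝ`. -/
def HasRep (β : ℕ → ℝ) (n : ℕ) : Prop := ∃ μ : Measure ℝ, IsRepMeas β n μ

/-- `(β 0, …, β n)` has an `r`-atomic representing measure on `ℝ`. -/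
def HasAtomicRep (β : ℕ → ℝ) (n r : ℕ) : Prop :=
  ∃ μ : Measure ℝ, IsRepMeas β n μ ∧ IsAtomicM μ r

/-- The partial Hankel matrix of `(β 0, …, β 2k)`, with the entries at positions `(i, j)`
with `i + j ∈ miss` unspecified, is partially positive semidefinite: every fully specified
principal submatrix is positive semidefinite. -/
def PartialPSD (β : ℕ → ℝ) (k : ℕ) (miss : Set ℕ) : Prop :=
  ∀ S : Finset (Fin (k + 1)),
    (∀ i ∈ S, ∀ j ∈ S, ((i : ℕ) + (j : ℕ)) ∉ miss) →
    Matrix.PosSemidef ((Hmat β 0 k).submatrix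
      (fun a : S => (a : Fin (k + 1))) (fun a : S => (a : Fin (k + 1))))

/-- The bordered matrix `[[A, vᵀ],[v, c]]`. -/
def borderB {n : Type*} [Fintype n] (A : Matrix n n ℝ) (v : n → ℝ) (c : ℝ) :
    Matrix (n ⊕ Unit) (n ⊕ Unit) ℝ :=
  Matrix.fromBlocks A (Matrix.of fun i _ => v i) (Matrix.of fun _ j => v j)
    (Matrix.of fun _ _ => c)

/-- The bordered matrix `[[c, v],[vᵀ, A]]`. -/
def borderT {n : Type*} [Fintype n] (c : ℝ) (v : n → ℝ) (A : Matrix n n ℝ) :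
    Matrix (Unit ⊕ n) (Unit ⊕ n) ℝ :=
  Matrix.fromBlocks (Matrix.of fun _ _ => c) (Matrix.of fun _ j => v j)
    (Matrix.of fun i _ => v i) A

/-!
Positive semidefiniteness of `M` forces `b ⟂ ker A`; as `A` is symmetric, `b` then lies in the
range of `A`, so `y = A⁺ b` solves `A y = b`. With this `y` the block LDU factorization
`M = [[1, 0], [yᵀ, 1]] · diag(A, c - bᵀy) · [[1, y], [0, 1]]` holds without inverting `A`, and the
outer factors are unipotent, so `rank M = rank A + rank (c - bᵀ A⁺ b)`.
-/

theorem Submodule.finrank_prod {K V W : Type*} [Field K] [AddCommGroup V] [AddCommGroup W]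
    [Module K V] [Module K W] [FiniteDimensional K V] [FiniteDimensional K W]
    (p : Submodule K V) (q : Submodule K W) :
    Module.finrank K (p.prod q) = Module.finrank K p + Module.finrank K q := by
  have hrange : LinearMap.range (p.subtype.prodMap q.subtype) = p.prod q := by
    rw [LinearMap.range_prodMap, Submodule.range_subtype, Submodule.range_subtype]
  rw [← hrange, LinearMap.finrank_range_of_inj (Prod.map_injective.mpr
    ⟨p.subtype_injective, q.subtype_injective⟩), Module.finrank_prod]

namespace Matrix

section Blocks

variable {K : Type*} [Field K] {l m n o : Type*} [Fintype l] [Fintype m] [Fintype n] [Fintype o]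

theorem rank_fromBlocks_zero_zero (A : Matrix m n K) (D : Matrix l o K) :
    (fromBlocks A 0 0 D).rank = A.rank + D.rank := by
  let e := LinearEquiv.sumArrowLequivProdArrow n o K K
  let e' := LinearEquiv.sumArrowLequivProdArrow m l K K
  have hconj : (fromBlocks A 0 0 D).mulVecLin
      = e'.symm.toLinearMap ∘ₗ (A.mulVecLin.prodMap D.mulVecLin) ∘ₗ e.toLinearMap := by
    refine LinearMap.ext fun x => funext fun i => ?_
    cases i <;> simp [e, e', fromBlocks_mulVec, LinearEquiv.sumArrowLequivProdArrow,
      Equiv.sumArrowEquivProdArrow]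
  rw [rank, hconj, LinearMap.range_comp, LinearMap.range_comp, LinearEquiv.range,
    Submodule.map_top, LinearEquiv.finrank_map_eq, LinearMap.range_prodMap,
    Submodule.finrank_prod]
  rfl

variable [DecidableEq l] [DecidableEq m] [DecidableEq n]

theorem fromBlocks_eq_of_mul_eq {A : Matrix m m K} {B : Matrix m n K} {C : Matrix l m K}
    {D : Matrix l n K} {X : Matrix m n K} {Y : Matrix l m K} (hX : A * X = B) (hY : Y * A = C) :
    fromBlocks A B C D =
      (fromBlocks 1 0 Y 1 : Matrix (m ⊕ l) (m ⊕ l) K) * fromBlocks A 0 0 (D - Y * A * X) *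
        (fromBlocks 1 X 0 1 : Matrix (m ⊕ n) (m ⊕ n) K) := by
  subst hX hY
  simp [fromBlocks_multiply, Matrix.mul_assoc]

theorem rank_fromBlocks_of_mul_eq {A : Matrix m m K} {B : Matrix m n K} {C : Matrix l m K}
    {D : Matrix l n K} {X : Matrix m n K} {Y : Matrix l m K} (hX : A * X = B) (hY : Y * A = C) :
    (fromBlocks A B C D).rank = A.rank + (D - Y * A * X).rank := by
  have hL : IsUnit (fromBlocks 1 0 Y 1 : Matrix (m ⊕ l) (m ⊕ l) K).det := by simp
  have hU : IsUnit (fromBlocks 1 X 0 1 : Matrix (m ⊕ n) (m ⊕ n) K).det := by simp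
  rw [fromBlocks_eq_of_mul_eq hX hY, rank_mul_eq_left_of_isUnit_det _ _ hU,
    rank_mul_eq_right_of_isUnit_det _ _ hL, rank_fromBlocks_zero_zero]

end Blocks

theorem rank_of_unit_unit {K : Type*} [Field K] [DecidableEq K] (s : K) :
    (of fun _ _ : Unit => s).rank = if s = 0 then 0 else 1 := by
  split_ifs with hs
  · subst hs; exact rank_zero
  · rw [rank_of_det_ne_zero] <;> simp [hs]

end Matrix

section PseudoInverse

theorem pinv_spec {m n : Type*} [Fintype m] [Fintype n] {A : Matrix m n ℝ}
    (h : ∃ B : Matrix n m ℝ,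
      A * B * A = A ∧ B * A * B = B ∧ (A * B)ᵀ = A * B ∧ (B * A)ᵀ = B * A) :
    A * pinv A * A = A ∧ pinv A * A * pinv A = pinv A ∧
      (A * pinv A)ᵀ = A * pinv A ∧ (pinv A * A)ᵀ = pinv A * A := by
  rw [pinv, dif_pos h]
  exact h.choose_spec

variable {n : Type*} [Fintype n] [DecidableEq n]

theorem exists_penrose_of_isSymm {A : Matrix n n ℝ} (hA : A.IsSymm) :
    ∃ B : Matrix n n ℝ,
      A * B * A = A ∧ B * A * B = B ∧ (A * B)ᵀ = A * B ∧ (B * A)ᵀ = B * A := by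
  have hsa : IsSelfAdjoint A := (isHermitian_iff_isSymm.mpr hA).isSelfAdjoint
  have hcont (f : ℝ → ℝ) : ContinuousOn f (spectrum ℝ A) := A.finite_real_spectrum.continuousOn f
  -- `0⁻¹ = 0`: `B` inverts `A` on its range and vanishes on its kernel
  set B := cfc (·⁻¹ : ℝ → ℝ) A
  have hBt : Bᵀ = B := by
    rw [← conjTranspose_eq_transpose_of_trivial]; exact cfc_predicate (R := ℝ) _ A
  have hAB : A * B = B * A := by
    simpa only [cfc_id' ℝ A] using (cfc_commute_cfc (fun x : ℝ => x) (·⁻¹) A).eq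
  refine ⟨B, ?_, ?_, ?_, ?_⟩
  · calc A * B * A = cfc (fun x : ℝ => x * x⁻¹ * x) A := by
          rw [cfc_mul _ _ _ (hcont _) (hcont _), cfc_mul _ _ _ (hcont _) (hcont _), cfc_id' ℝ A]
      _ = A := by simp only [mul_inv_mul_cancel]; exact cfc_id' ℝ A
  · calc B * A * B = cfc (fun x : ℝ => x⁻¹ * x * x⁻¹) A := by
          rw [cfc_mul _ _ _ (hcont _) (hcont _), cfc_mul _ _ _ (hcont _) (hcont _), cfc_id' ℝ A]
      _ = B := by
        have hinv (x : ℝ) : x⁻¹ * x * x⁻¹ = x⁻¹ := by simpa using mul_inv_mul_cancel x⁻¹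
        simp only [hinv]
        rfl
  · rw [transpose_mul, hBt, hA.eq, hAB]
  · rw [transpose_mul, hBt, hA.eq, hAB]

theorem mulVec_pinv_mulVec_of_orthogonal_ker {A : Matrix n n ℝ} (hA : A.IsSymm) {b : n → ℝ}
    (hb : ∀ x, A *ᵥ x = 0 → b ⬝ᵥ x = 0) : A *ᵥ (pinv A *ᵥ b) = b := by
  obtain ⟨hAA, -, hAAt, -⟩ := pinv_spec (exists_penrose_of_isSymm hA)
  have hAAA : A * (A * pinv A) = A := by
    calc A * (A * pinv A) = (A * pinv A * Aᵀ)ᵀ := by rw [transpose_mul, transpose_transpose, hAAt]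
      _ = A := by rw [hA.eq, hAA, hA.eq]
  set r := b - A *ᵥ (pinv A *ᵥ b)
  have hAr : A *ᵥ r = 0 := by
    rw [mulVec_sub, mulVec_mulVec, mulVec_mulVec, Matrix.mul_assoc, hAAA, sub_self]
  have hrr : r ⬝ᵥ r = 0 := by
    calc r ⬝ᵥ r = b ⬝ᵥ r - (pinv A *ᵥ b) ⬝ᵥ (A *ᵥ r) := by
          rw [sub_dotProduct, dotProduct_mulVec, ← mulVec_transpose, hA.eq, dotProduct_comm]
      _ = 0 := by rw [hb r hAr, hAr, dotProduct_zero, sub_zero]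
  exact (sub_eq_zero.mp (dotProduct_self_eq_zero.mp hrr)).symm

end PseudoInverse

section Border

variable {n : Type*} [Fintype n] (A : Matrix n n ℝ) (v : n → ℝ) (c : ℝ)

theorem borderB_eq_fromBlocks :
    borderB A v c =
      fromBlocks A (replicateCol Unit v) (replicateRow Unit v) (of fun _ _ => c) :=
  rfl

theorem borderB_mulVec_inl (x : n → ℝ) :
    borderB A v c *ᵥ Sum.elim x 0 = Sum.elim (A *ᵥ x) (fun _ => v ⬝ᵥ x) := by
  ext (i | _) <;> simp [borderB_eq_fromBlocks, fromBlocks_mulVec, replicateRow_mulVec_eq_const]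

variable {A v c}

theorem dotProduct_eq_zero_of_posSemidef_borderB (hM : (borderB A v c).PosSemidef)
    {x : n → ℝ} (hx : A *ᵥ x = 0) : v ⬝ᵥ x = 0 := by
  have hquad : star (Sum.elim x 0) ⬝ᵥ borderB A v c *ᵥ Sum.elim x 0 = 0 := by
    simp [borderB_mulVec_inl, hx]
  have hker := congrFun ((hM.dotProduct_mulVec_zero_iff _).mp hquad) (Sum.inr ())
  simpa [borderB_mulVec_inl] using hker

theorem rank_borderB_of_mulVec_eq [DecidableEq n] (hA : A.IsSymm) {y : n → ℝ}
    (hy : A *ᵥ y = v) : (borderB A v c).rank = A.rank + if c - v ⬝ᵥ y = 0 then 0 else 1 := by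
  have hX : A * replicateCol Unit y = replicateCol Unit v := by
    rw [← replicateCol_mulVec, hy]
  have hY : replicateRow Unit y * A = replicateRow Unit v := by
    rw [← replicateRow_vecMul, ← mulVec_transpose, hA.eq, hy]
  rw [borderB_eq_fromBlocks, rank_fromBlocks_of_mul_eq hX hY, hY, replicateRow_mul_replicateCol,
    ← rank_of_unit_unit]
  rfl

end Border

/-- For a psd bordered matrix `M = [[A, b],[bᵀ, c]]`, `rank M = rank A` iff the generalized
Schur complement `M/A = c - bᵀ A⁺ b` is zero; otherwise `rank M = rank A + 1`. -/
theorem rank_border_psd {n : ℕ} (A : Matrix (Fin n) (Fin n) ℝ) (hA : A.IsSymm)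
    (b : Fin n → ℝ) (c : ℝ) (hM : (borderB A b c).PosSemidef) :
    ((borderB A b c).rank = A.rank ↔ c - b ⬝ᵥ (pinv A) *ᵥ b = 0) ∧
    (c - b ⬝ᵥ (pinv A) *ᵥ b ≠ 0 → (borderB A b c).rank = A.rank + 1) := by
  have hy : A *ᵥ (pinv A *ᵥ b) = b :=
    mulVec_pinv_mulVec_of_orthogonal_ker hA fun _ => dotProduct_eq_zero_of_posSemidef_borderB hM
  rw [rank_borderB_of_mulVec_eq hA hy]
  split_ifs with hs <;> simp [hs]
end
end

section
/- Let K = [[A, B, D],[Bᵀ, C, E],[Dᵀ, Eᵀ, F]] be a real symmetric block matrix of size n₁+n₂+n₃, where A, C, F are real symmetric matrices of sizes n₁, n₂, n₃ and B, D, E are real matrices of sizes n₁×n₂, n₁×n₃, n₂×n₃. Write M = [[A, B],[Bᵀ, C]] and N = [[C, E],[Eᵀ, F]]. (i) If M and A are nonsingular, then K/M = ([[A,D],[Dᵀ,F]]/A) − ([[A,B],[Dᵀ,Eᵀ]]/A) · (M/A)⁻¹ · ([[A,D],[Bᵀ,E]]/A). (ii) If N and C are nonsingular, then K/N = ([[C,Bᵀ],[B,A]]/C)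 − ([[C,E],[B,D]]/C) · (N/C)⁻¹ · ([[C,Bᵀ],[Eᵀ,Dᵀ]]/C). -/
/-!
When `A` and `M` are nonsingular, the pseudoinverses are ordinary inverses, and both formulas are
the Crabtree–Haynsworth quotient formula `K/M = (K/A)/(M/A)`: expanding `M⁻¹` blockwise through
the Schur complement `M/A` turns `F - [Dᵀ Eᵀ] M⁻¹ [D; E]` into the right-hand side. Part (ii) is
the same identity with the index blocks taken in the order `n₂, n₃, n₁`.
-/

open Matrix

noncomputable section

attribute [local instance] Classical.propDecidable

namespace Matrix

variable {l m n R : Type*}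

theorem of_sum_elim_eq_fromRows (D : Matrix l n R) (E : Matrix m n R) :
    (of fun i j => Sum.elim (fun a => D a j) (fun c => E c j) i) = fromRows D E := by
  ext (i | i) j <;> rfl

theorem of_sum_elim_eq_fromCols (D : Matrix l m R) (E : Matrix l n R) :
    (of fun i j => Sum.elim (fun a => D i a) (fun c => E i c) j) = fromCols D E :=
  rfl

theorem eq_nonsing_inv_of_mul_mul_self [Fintype n] [DecidableEq n] [CommRing R]
    {A X : Matrix n n R} (hA : IsUnit A.det) (hX : A * X * A = A) : X = A⁻¹ := by
  have hAX : A * X = 1 := by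
    simpa only [Matrix.mul_assoc, mul_nonsing_inv A hA, Matrix.mul_one] using
      congrArg (· * A⁻¹) hX
  exact (inv_eq_right_inv hAX).symm

theorem sub_fromCols_mul_inv_fromBlocks_mul_fromRows [Fintype l] [Fintype m]
    [DecidableEq l] [DecidableEq m] [CommRing R]
    (A : Matrix l l R) (B : Matrix l m R) (B' : Matrix m l R) (C : Matrix m m R)
    (D : Matrix l n R) (D' : Matrix n l R) (E : Matrix m n R) (E' : Matrix n m R)
    (F : Matrix n n R) (hM : IsUnit (fromBlocks A B B' C).det) (hA : IsUnit A.det) :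
    F - fromCols D' E' * (fromBlocks A B B' C)⁻¹ * fromRows D E =
      (F - D' * A⁻¹ * D) -
        (E' - D' * A⁻¹ * B) * (C - B' * A⁻¹ * B)⁻¹ * (E - B' * A⁻¹ * D) := by
  let := A.invertibleOfIsUnitDet hA
  let := (fromBlocks A B B' C).invertibleOfIsUnitDet hM
  let := invertibleOfFromBlocks₁₁Invertible A B B' C
  rw [← invOf_eq_nonsing_inv (fromBlocks A B B' C), invOf_fromBlocks₁₁_eq,
    fromCols_mul_fromBlocks, fromCols_mul_fromRows]
  simp only [invOf_eq_nonsing_inv]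
  generalize (C - B' * A⁻¹ * B)⁻¹ = S
  simp only [Matrix.sub_mul, Matrix.mul_sub, Matrix.add_mul, Matrix.mul_add, Matrix.neg_mul,
    Matrix.mul_neg, Matrix.mul_assoc]
  abel

end Matrix

theorem pinv_eq_nonsing_inv {n : Type*} [Fintype n] [DecidableEq n] {A : Matrix n n ℝ}
    (hA : IsUnit A.det) : pinv A = A⁻¹ := by
  have hMP : ∃ X : Matrix n n ℝ,
      A * X * A = A ∧ X * A * X = X ∧ (A * X)ᵀ = A * X ∧ (X * A)ᵀ = X * A := by
    refine ⟨A⁻¹, ?_, ?_, ?_, ?_⟩ <;>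
      simp [mul_nonsing_inv A hA, nonsing_inv_mul A hA]
  rw [pinv, dif_pos hMP]
  exact eq_nonsing_inv_of_mul_mul_self hA hMP.choose_spec.1

theorem schur_quotient_formula_general {n₁ n₂ n₃ : Type*}
    [Fintype n₁] [Fintype n₂] [Fintype n₃]
    [DecidableEq n₁] [DecidableEq n₂] [DecidableEq n₃]
    (A : Matrix n₁ n₁ ℝ) (C : Matrix n₂ n₂ ℝ) (F : Matrix n₃ n₃ ℝ)
    (B : Matrix n₁ n₂ ℝ) (D : Matrix n₁ n₃ ℝ) (E : Matrix n₂ n₃ ℝ) :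
    (IsUnit (Matrix.fromBlocks A B Bᵀ C).det → IsUnit A.det →
      F - (Matrix.of fun (i : n₃) (j : n₁ ⊕ n₂) =>
            Sum.elim (fun a => Dᵀ i a) (fun c => Eᵀ i c) j) *
          pinv (Matrix.fromBlocks A B Bᵀ C) *
          (Matrix.of fun (i : n₁ ⊕ n₂) (j : n₃) =>
            Sum.elim (fun a => D a j) (fun c => E c j) i) =
        (F - Dᵀ * pinv A * D) -
          (Eᵀ - Dᵀ * pinv A * B) * (C - Bᵀ * pinv A * B)⁻¹ * (E - Bᵀ * pinv A * D)) ∧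
    (IsUnit (Matrix.fromBlocks C E Eᵀ F).det → IsUnit C.det →
      A - (Matrix.of fun (i : n₁) (j : n₂ ⊕ n₃) =>
            Sum.elim (fun c => B i c) (fun f => D i f) j) *
          pinv (Matrix.fromBlocks C E Eᵀ F) *
          (Matrix.of fun (i : n₂ ⊕ n₃) (j : n₁) =>
            Sum.elim (fun c => Bᵀ c j) (fun f => Dᵀ f j) i) =
        (A - B * pinv C * Bᵀ) -
          (D - B * pinv C * E) * (F - Eᵀ * pinv C * E)⁻¹ * (Dᵀ - Eᵀ * pinv C * Bᵀ)) := by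
  refine ⟨fun hM hA => ?_, fun hN hC => ?_⟩
  · rw [pinv_eq_nonsing_inv hM, pinv_eq_nonsing_inv hA, of_sum_elim_eq_fromCols,
      of_sum_elim_eq_fromRows]
    exact sub_fromCols_mul_inv_fromBlocks_mul_fromRows A B Bᵀ C D Dᵀ E Eᵀ F hM hA
  · rw [pinv_eq_nonsing_inv hN, pinv_eq_nonsing_inv hC, of_sum_elim_eq_fromCols,
      of_sum_elim_eq_fromRows]
    exact sub_fromCols_mul_inv_fromBlocks_mul_fromRows C E Eᵀ F Bᵀ B Dᵀ D A hN hC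

/-- Quotient formulas for the generalized Schur complements of the upper left-hand `2×2` block
`M = [[A, B],[Bᵀ, C]]` and of the lower right-hand `2×2` block `N = [[C, E],[Eᵀ, F]]` in the
symmetric `3×3` block matrix `K = [[A, B, D],[Bᵀ, C, E],[Dᵀ, Eᵀ, F]]`. -/
theorem schur_quotient_formula {n₁ n₂ n₃ : Type*}
    [Fintype n₁] [Fintype n₂] [Fintype n₃]
    [DecidableEq n₁] [DecidableEq n₂] [DecidableEq n₃]
    (A : Matrix n₁ n₁ ℝ) (C : Matrix n₂ n₂ ℝ) (F : Matrix n₃ n₃ ℝ)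
    (B : Matrix n₁ n₂ ℝ) (D : Matrix n₁ n₃ ℝ) (E : Matrix n₂ n₃ ℝ)
    (hA : A.IsSymm) (hC : C.IsSymm) (hF : F.IsSymm) :
    (IsUnit (Matrix.fromBlocks A B Bᵀ C).det → IsUnit A.det →
      F - (Matrix.of fun (i : n₃) (j : n₁ ⊕ n₂) =>
            Sum.elim (fun a => Dᵀ i a) (fun c => Eᵀ i c) j) *
          pinv (Matrix.fromBlocks A B Bᵀ C) *
          (Matrix.of fun (i : n₁ ⊕ n₂) (j : n₃) =>
            Sum.elim (fun a => D a j) (fun c => E c j) i) =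
        (F - Dᵀ * pinv A * D) -
          (Eᵀ - Dᵀ * pinv A * B) * (C - Bᵀ * pinv A * B)⁻¹ * (E - Bᵀ * pinv A * D)) ∧
    (IsUnit (Matrix.fromBlocks C E Eᵀ F).det → IsUnit C.det →
      A - (Matrix.of fun (i : n₁) (j : n₂ ⊕ n₃) =>
            Sum.elim (fun c => B i c) (fun f => D i f) j) *
          pinv (Matrix.fromBlocks C E Eᵀ F) *
          (Matrix.of fun (i : n₂ ⊕ n₃) (j : n₁) =>
            Sum.elim (fun c => Bᵀ c j) (fun f => Dᵀ f j) i) =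
        (A - B * pinv C * Bᵀ) -
          (D - B * pinv C * E) * (F - Eᵀ * pinv C * E)⁻¹ * (Dᵀ - Eᵀ * pinv C * Bᵀ)) :=
  schur_quotient_formula_general A C F B D E

end
end

section
/- Let k ∈ ℕ, let β = (β_0,…,β_{2k}) be a real sequence such that the Hankel matrix A_β is positive semidefinite and singular, let β̃ = (β_0,…,β_{2k−2}) and r = rank β̃. Then r = rank β = rank A_β(r−1) = rank A_β(r) = … = rank A_β(k−1) = rank A_{β̃}. -/
open Matrix MeasureTheory

noncomputable section

attribute [local instance] Classical.propDecidable

/-!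
In a positive semidefinite matrix `A`, `zᵀ A z = 0` forces `A z = 0`. Applied to `A_β(k)`, this
extends a column relation of `A_β(m)` (involving only the columns `≤ m`) to a column relation of
`A_β(k)`. The Hankel structure lets a relation among the first `k` columns be shifted by one index,
so once column `r` depends on the earlier ones, so do the columns `r + 1, …, k - 1`. Hence for the
first dependent column `r` of `A_β(k)`, the matrix `A_β(r - 1)` is invertible, the columns of
`A_β(m)` (`m ≤ k - 1`) lie in the span of the first `r`, and `r` is also the first dependent
column of `A_β(k - 1)`.
-/

open Module Submodule Set

theorem linearIndependent_iff_forall_notMem_span_image_Iio {ι K V : Type*} [LinearOrder ι]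
    [DivisionRing K] [AddCommGroup V] [Module K V] {v : ι → V} :
    LinearIndependent K v ↔ ∀ i, v i ∉ span K (v '' Iio i) := by
  refine ⟨fun hv i => hv.notMem_span_image (lt_irrefl i), fun h => ?_⟩
  by_contra hdep
  obtain ⟨s, g, hsum, i, his, hgi⟩ := not_linearIndependent_iff.1 hdep
  classical
  have hne : (s.filter (g · ≠ 0)).Nonempty := ⟨i, Finset.mem_filter.2 ⟨his, hgi⟩⟩
  set t := (s.filter (g · ≠ 0)).max' hne
  obtain ⟨hts, hgt⟩ := Finset.mem_filter.1 ((s.filter (g · ≠ 0)).max'_mem hne)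
  have hrest : ∑ j ∈ s.erase t, g j • v j ∈ span K (v '' Iio t) := by
    refine sum_mem fun j hj => ?_
    obtain ⟨hjt, hjs⟩ := Finset.mem_erase.1 hj
    by_cases hgj : g j = 0
    · simp [hgj]
    · have hjt' : j ≤ t := (s.filter (g · ≠ 0)).le_max' j (Finset.mem_filter.2 ⟨hjs, hgj⟩)
      exact smul_mem _ _ (subset_span ⟨j, lt_of_le_of_ne hjt' hjt, rfl⟩)
  have hgtv : g t • v t ∈ span K (v '' Iio t) := by
    rw [← Finset.add_sum_erase s _ hts, add_eq_zero_iff_eq_neg] at hsum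
    exact hsum ▸ neg_mem hrest
  exact h t ((smul_mem_iff _ hgt).1 hgtv)

theorem mem_span_image_Iio_of_forall_mem_span_image_Iio {R M : Type*} [Semiring R]
    [AddCommMonoid M] [Module R M] {v : ℕ → M} {r m : ℕ}
    (h : ∀ t, r ≤ t → t ≤ m → v t ∈ span R (v '' Iio t)) {t : ℕ} (htm : t ≤ m) :
    v t ∈ span R (v '' Iio r) := by
  induction t using Nat.strong_induction_on with
  | _ t ih =>
    rcases lt_or_ge t r with htr | hrt
    · exact subset_span ⟨t, htr, rfl⟩
    · refine span_le.2 ?_ (h t hrt htm)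
      rintro _ ⟨j, hjt, rfl⟩
      exact ih j hjt (hjt.le.trans htm)

def ColInSpanPrev (β : ℕ → ℝ) (m t : ℕ) : Prop :=
  Hcol β 0 m t ∈ span ℝ (Hcol β 0 m '' Iio t)

variable {β : ℕ → ℝ} {k m t : ℕ}

@[simp]
theorem Hcol_apply (j : ℕ) (ℓ : Fin (m + 1)) : Hcol β 0 m j ℓ = β (j + ℓ) := by
  simp [Hcol]

theorem Hmat_col (j : Fin (m + 1)) : (Hmat β 0 m).col j = Hcol β 0 m j := by
  ext ℓ
  simp [Hmat, add_comm]

theorem isUnit_det_Hmat_iff : IsUnit (Hmat β 0 m).det ↔ ∀ t ≤ m, ¬ ColInSpanPrev β m t := by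
  have himage (i : Fin (m + 1)) : (Hmat β 0 m).col '' Iio i = Hcol β 0 m '' Iio (i : ℕ) := by
    rw [show (Hmat β 0 m).col = Hcol β 0 m ∘ Fin.val from funext Hmat_col, image_comp,
      Fin.image_val_Iio]
  rw [← isUnit_iff_isUnit_det, ← linearIndependent_cols_iff_isUnit,
    linearIndependent_iff_forall_notMem_span_image_Iio]
  simp only [himage]
  simp only [Hmat_col, Fin.forall_iff, Nat.lt_succ_iff]
  rfl

theorem seqRank_of_not_isUnit (h : ¬ IsUnit (Hmat β 0 m).det) :
    seqRank β 0 m = sInf {t | ColInSpanPrev β m t} := by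
  rw [seqRank, if_neg h]
  rfl

theorem ColInSpanPrev.shift {m' s : ℕ} (h : ColInSpanPrev β m t) (hm : m' + s ≤ m) :
    ColInSpanPrev β m' (t + s) := by
  let T : (Fin (m + 1) → ℝ) →ₗ[ℝ] (Fin (m' + 1) → ℝ) :=
    LinearMap.funLeft ℝ ℝ fun ℓ => ⟨ℓ + s, by omega⟩
  have hT : ∀ j, T (Hcol β 0 m j) = Hcol β 0 m' (j + s) := fun j => by
    ext ℓ
    simp [T, LinearMap.funLeft_apply, add_assoc, add_comm s]
  have := mem_map_of_mem (f := T) h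
  simp only [map_span, image_image, hT] at this
  refine span_mono ?_ this
  rintro _ ⟨j, hjt, rfl⟩
  exact ⟨j + s, Nat.add_lt_add_right hjt s, rfl⟩

theorem ColInSpanPrev.extend (hpsd : (Hmat β 0 k).PosSemidef) (h : ColInSpanPrev β m t)
    (htm : t ≤ m) (hmk : m ≤ k) : ColInSpanPrev β k t := by
  rw [ColInSpanPrev, ← Finset.coe_range, mem_span_image_finset_iff_exists_fun'] at h ⊢
  obtain ⟨c, hc⟩ := h
  refine ⟨c, ?_⟩
  let e : ℕ → Fin (k + 1) → ℝ := fun j => Pi.single (Fin.ofNat (k + 1) j) 1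
  have hval : ∀ j ≤ k, j % (k + 1) = j := fun j hj =>
    Nat.mod_eq_of_lt (Nat.lt_succ_of_le hj)
  set z := e t - ∑ j ∈ Finset.range t, c j • e j
  have hHz : Hmat β 0 k *ᵥ z = Hcol β 0 k t - ∑ j ∈ Finset.range t, c j • Hcol β 0 k j := by
    have hHe : ∀ j ≤ k, Hmat β 0 k *ᵥ e j = Hcol β 0 k j := fun j hj => by
      ext ℓ
      simp [e, Hmat, hval j hj, add_comm]
    rw [mulVec_sub, mulVec_sum, hHe t (htm.trans hmk)]
    congr 1
    refine Finset.sum_congr rfl fun j hj => ?_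
    rw [mulVec_smul, hHe j (by have := Finset.mem_range.1 hj; omega)]
  have hlow : ∀ j ≤ m, (Hmat β 0 k *ᵥ z) (Fin.ofNat (k + 1) j) = 0 := fun j hj => by
    have := congrFun hc ⟨j, Nat.lt_succ_of_le hj⟩
    simp only [Finset.sum_apply, Pi.smul_apply, Hcol_apply, smul_eq_mul] at this
    simp only [hHz, Pi.sub_apply, Finset.sum_apply, Pi.smul_apply, Hcol_apply, smul_eq_mul,
      Fin.val_ofNat, hval j (hj.trans hmk)]
    exact sub_eq_zero.2 this.symm
  have hz_dot : ∀ w, z ⬝ᵥ w = w (Fin.ofNat (k + 1) t) -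
      ∑ j ∈ Finset.range t, c j * w (Fin.ofNat (k + 1) j) := fun w => by
    simp [z, e, sub_dotProduct, sum_dotProduct, smul_dotProduct]
  -- `z` is supported where `A_β(k) z` vanishes, so the quadratic form of the psd `A_β(k)` kills it.
  have hq : star z ⬝ᵥ Hmat β 0 k *ᵥ z = 0 := by
    rw [star_trivial, hz_dot, hlow t htm, zero_sub, neg_eq_zero]
    exact Finset.sum_eq_zero fun j hj => by
      rw [hlow j (by have := Finset.mem_range.1 hj; omega), mul_zero]
  have := (hpsd.dotProduct_mulVec_zero_iff z).1 hq
  rw [hHz, sub_eq_zero] at this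
  exact this.symm

theorem ColInSpanPrev.propagate {r : ℕ} (hpsd : (Hmat β 0 k).PosSemidef)
    (hr : ColInSpanPrev β k r) (hrt : r ≤ t) (htk : t ≤ k - 1) : ColInSpanPrev β (k - 1) t := by
  induction t, hrt using Nat.le_induction with
  | base => exact hr.shift (s := 0) (Nat.sub_le k 1)
  | succ t hrt ih =>
    exact ((ih (by omega)).extend hpsd (by omega) (Nat.sub_le k 1)).shift (s := 1) (by omega)

theorem isUnit_det_Hmat_of_lt {r : ℕ} (hpsd : (Hmat β 0 k).PosSemidef)
    (hr : IsLeast {t | ColInSpanPrev β k t} r) (hmr : m < r) (hmk : m ≤ k) :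
    IsUnit (Hmat β 0 m).det :=
  isUnit_det_Hmat_iff.2 fun t htm ht => by
    have := hr.2 (ht.extend hpsd htm hmk)
    omega

theorem seqRank_eq_of_le {r : ℕ} (hpsd : (Hmat β 0 k).PosSemidef)
    (hr : IsLeast {t | ColInSpanPrev β k t} r) (hrm : r ≤ m) (hmk : m ≤ k) :
    seqRank β 0 m = r := by
  have hmr : ColInSpanPrev β m r := hr.1.shift (s := 0) hmk
  rw [seqRank_of_not_isUnit fun hu => isUnit_det_Hmat_iff.1 hu r hrm hmr]
  refine le_antisymm (Nat.sInf_le hmr) (le_csInf ⟨r, hmr⟩ fun t ht => ?_)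
  by_contra! htr
  exact absurd (hr.2 (ht.extend hpsd (by omega) hmk)) (by omega)

theorem rank_Hmat_mono {m' : ℕ} (h : m' ≤ m) : (Hmat β 0 m').rank ≤ (Hmat β 0 m).rank := by
  exact rank_submatrix_le (Hmat β 0 m) (Fin.castLE (by omega)) (Fin.castLE (by omega))

theorem rank_Hmat_le {r : ℕ} (h : ∀ t, r ≤ t → t ≤ m → ColInSpanPrev β m t) :
    (Hmat β 0 m).rank ≤ r := by
  let s : Finset (Fin (m + 1) → ℝ) := (Finset.range r).image (Hcol β 0 m)
  rw [rank_eq_finrank_span_cols]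
  calc finrank ℝ (span ℝ (range (Hmat β 0 m).col))
      ≤ finrank ℝ (span ℝ (s : Set (Fin (m + 1) → ℝ))) := by
        refine Submodule.finrank_mono (span_le.2 ?_)
        rintro _ ⟨j, rfl⟩
        rw [Hmat_col, Finset.coe_image, Finset.coe_range]
        exact mem_span_image_Iio_of_forall_mem_span_image_Iio h (Nat.lt_succ_iff.1 j.2)
    _ ≤ s.card := finrank_span_finset_le_card s
    _ ≤ r := Finset.card_image_le.trans (Finset.card_range r).le

theorem rank_Hmat_eq {r : ℕ} (hpsd : (Hmat β 0 k).PosSemidef)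
    (hr : IsLeast {t | ColInSpanPrev β k t} r) (hrm : r ≤ m + 1) (hmk : m ≤ k - 1) :
    (Hmat β 0 m).rank = r := by
  refine le_antisymm (rank_Hmat_le fun t hrt htm => ?_) ?_
  · exact (hr.1.propagate hpsd hrt (htm.trans hmk)).shift (s := 0) hmk
  · obtain _ | r := r
    · exact Nat.zero_le _
    · calc r + 1 = (Hmat β 0 r).rank := by
            rw [rank_of_isUnit _ ((isUnit_iff_isUnit_det _).2
              (isUnit_det_Hmat_of_lt hpsd hr r.lt_succ_self (by omega))), Fintype.card_fin]
        _ ≤ (Hmat β 0 m).rank := rank_Hmat_mono (by omega)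

theorem rank_chain_psd_singular_general (k : ℕ) (β : ℕ → ℝ)
    (hpsd : (Hmat β 0 k).PosSemidef) (hsing : ¬ IsUnit (Hmat β 0 k).det) :
    seqRank β 0 k = seqRank β 0 (k - 1) ∧
    (∀ m : ℕ, seqRank β 0 (k - 1) - 1 ≤ m → m ≤ k - 1 →
      (Hmat β 0 m).rank = seqRank β 0 (k - 1)) := by
  obtain ⟨t, htk, ht⟩ : ∃ t ≤ k, ColInSpanPrev β k t := by
    by_contra! h
    exact hsing (isUnit_det_Hmat_iff.2 h)
  set r := sInf {t | ColInSpanPrev β k t}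
  have hr : IsLeast {t | ColInSpanPrev β k t} r := isLeast_csInf ⟨t, ht⟩
  have hrk : r ≤ k := (hr.2 ht).trans htk
  have hpred : seqRank β 0 (k - 1) = r := by
    rcases le_or_gt r (k - 1) with hrk' | hkr
    · exact seqRank_eq_of_le hpsd hr hrk' (Nat.sub_le k 1)
    · rw [seqRank, if_pos (isUnit_det_Hmat_of_lt hpsd hr hkr (Nat.sub_le k 1))]
      omega
  refine ⟨by rw [seqRank_eq_of_le hpsd hr hrk le_rfl, hpred], fun m hm hmk => ?_⟩
  rw [hpred] at hm ⊢
  exact rank_Hmat_eq hpsd hr (by omega) hmk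

/-- If the Hankel matrix `A_β` of `(β 0, …, β (2k))` is psd and singular, and
`r = rank (β 0, …, β (2k-2))`, then
`r = rank β = rank A_β(r-1) = … = rank A_β(k-1) = rank A_{β̃}`. -/
theorem rank_chain_psd_singular (k : ℕ) (hk : 1 ≤ k) (β : ℕ → ℝ)
    (hpsd : (Hmat β 0 k).PosSemidef) (hsing : ¬ IsUnit (Hmat β 0 k).det) :
    seqRank β 0 k = seqRank β 0 (k - 1) ∧
    (∀ m : ℕ, seqRank β 0 (k - 1) - 1 ≤ m → m ≤ k - 1 →
      (Hmat β 0 m).rank = seqRank β 0 (k - 1)) :=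
  rank_chain_psd_singular_general k β hpsd hsing

end
end

section
/- Let k ∈ ℕ, let β = (β_0,…,β_{2k}) be a real sequence such that the Hankel matrix A_β is positive semidefinite and singular, let β^{(rev)} = (β_{2k},β_{2k−1},…,β_0), β̃^{(rev)} = (β_{2k},…,β_2), and r = rank β̃^{(rev)}. Then r = rank β^{(rev)} = rank A_β[r−1] = rank A_β[r] = … = rank A_β[k−1] = rank A_{β̃^{(rev)}}. -/
open Matrix MeasureTheory

noncomputable section

attribute [local instance] Classical.propDecidable

/-!
Let `γ` be the reversed sequence. Its Hankel matrix is `A_β` with rows and columns reversed, so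
it is psd and singular, and the corners `A_β[m]` are its leading principal submatrices read
backwards. Let `r` be the first index at which a column of `A_γ` depends on the earlier ones.

Positive semidefiniteness makes restriction to the first `m + 1` coordinates injective on the
span of the first `m + 1` columns. Together with the Hankel shift structure, this carries the
relation of column `r` over to columns `r + 1, …, k - 1`. Hence for `r ≤ m + 1 ≤ k` the first
`m + 1` columns span the same `r`-dimensional space, and the leading `(m + 1)`-corner has rank
`r`. In the truncation `(γ 0, …, γ (2k - 2))` columns `0, …, r - 1` stay independent and column
`r` stays dependent, so its rank is `r` as well.
-/

open Set Submodule LinearMap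

section DependentIndices

theorem range_fin_eq_image_Iio {α : Type*} (v : ℕ → α) (n : ℕ) :
    range (fun i : Fin n => v i) = v '' Iio n := by
  rw [← Fin.range_val, ← range_comp]
  rfl

def dependentIndices (K : Type*) {N : Type*} [DivisionRing K] [AddCommGroup N] [Module K N]
    (v : ℕ → N) : Set ℕ :=
  {i | v i ∈ span K (v '' Iio i)}

variable {K N M : Type*} [DivisionRing K] [AddCommGroup N] [Module K N] [AddCommGroup M]
  [Module K M]

theorem linearIndependent_fin_iff_forall_lt_notMem {v : ℕ → N} {n : ℕ} :
    LinearIndependent K (fun i : Fin n => v i) ↔ ∀ i < n, i ∉ dependentIndices K v := by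
  induction n with
  | zero => simp
  | succ n ih =>
    have hsnoc : (fun i : Fin (n + 1) => v i) = Fin.snoc (fun i : Fin n => v i) (v n) := by
      funext i
      induction i using Fin.lastCases <;> simp
    rw [hsnoc, linearIndependent_finSnoc, ih, range_fin_eq_image_Iio, Nat.forall_lt_succ_right]
    rfl

theorem isLeast_sInf_dependentIndices {v : ℕ → N} {n : ℕ}
    (h : ¬ LinearIndependent K (fun i : Fin n => v i)) :
    IsLeast (dependentIndices K v) (sInf (dependentIndices K v)) ∧
      sInf (dependentIndices K v) < n := by
  obtain ⟨i, hin, hi⟩ : ∃ i < n, i ∈ dependentIndices K v := by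
    simpa [linearIndependent_fin_iff_forall_lt_notMem] using h
  exact ⟨⟨Nat.sInf_mem ⟨i, hi⟩, fun _ => Nat.sInf_le⟩, (Nat.sInf_le hi).trans_lt hin⟩

theorem mem_dependentIndices_comp (f : N →ₗ[K] M) {v : ℕ → N} {i : ℕ}
    (hi : i ∈ dependentIndices K v) : i ∈ dependentIndices K (f ∘ v) := by
  change f (v i) ∈ span K ((f ∘ v) '' Iio i)
  rw [image_comp, span_image]
  exact mem_map_of_mem hi

/-- Applying `σ` to a relation `v j = ∑ cᵢ • v i` gives `π (v (j + 1)) = π (∑ cᵢ • v (i + 1))`,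
which `hπ` lifts to a relation for `v (j + 1)`. -/
theorem mem_span_image_Iio_of_shift {v : ℕ → N} {σ π : N →ₗ[K] M} {r n : ℕ}
    (hshift : ∀ i, σ (v i) = π (v (i + 1))) (hπ : Disjoint (span K (v '' Iio n)) (ker π))
    (hr : r ∈ dependentIndices K v) :
    ∀ j, r ≤ j → j < n → v j ∈ span K (v '' Iio r) := by
  intro j hrj
  induction j, hrj using Nat.le_induction with
  | base => exact fun _ => hr
  | succ j hrj ih =>
    intro hjn
    set W := span K (v '' Iio r)
    have hcomp : σ ∘ v = π ∘ (v ∘ (· + 1)) := funext hshift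
    have hmap : map σ W = map π (span K ((v ∘ (· + 1)) '' Iio r)) := by
      rw [← span_image, ← span_image, ← image_comp, ← image_comp, hcomp]
    obtain ⟨y, hy, hyv⟩ := mem_map.mp (hmap ▸ hshift j ▸ mem_map_of_mem (ih (by omega)))
    have hyW : y ∈ W := by
      refine span_le.mpr ?_ hy
      rintro _ ⟨i, hi, rfl⟩
      rcases (Nat.succ_le_of_lt hi).lt_or_eq with h | h
      · exact subset_span ⟨i + 1, h, rfl⟩
      · change v (i + 1) ∈ W
        rw [show i + 1 = r from h]
        exact hr
    have hWn : W ≤ span K (v '' Iio n) := span_mono (image_mono (Iio_subset_Iio (by omega)))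
    have hdiff : v (j + 1) - y = 0 := disjoint_def.mp hπ _
      (sub_mem (subset_span ⟨j + 1, hjn, rfl⟩) (hWn hyW)) (by simp [hyv])
    rwa [sub_eq_zero.mp hdiff]

end DependentIndices

open scoped ComplexOrder in
/-- If `x = A w` with `w` supported on `s` and `x` vanishes on `s`, then `star w ⬝ᵥ A w = 0`. -/
theorem Matrix.PosSemidef.eq_zero_of_mem_span_col {𝕜 ι : Type*} [RCLike 𝕜] [Fintype ι]
    {A : Matrix ι ι 𝕜} (hA : A.PosSemidef) {s : Set ι} {x : ι → 𝕜}
    (hx : x ∈ span 𝕜 (A.col '' s)) (hs : ∀ i ∈ s, x i = 0) : x = 0 := by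
  classical
  obtain ⟨w, hws, rfl⟩ : ∃ w : ι → 𝕜, (∀ i ∉ s, w i = 0) ∧ A *ᵥ w = x := by
    clear hs
    induction hx using span_induction with
    | mem _ h =>
      obtain ⟨j, hj, rfl⟩ := h
      exact ⟨Pi.single j 1, fun i hi => Pi.single_eq_of_ne (by rintro rfl; exact hi hj) _,
        mulVec_single_one _ _⟩
    | zero => exact ⟨0, fun _ _ => rfl, mulVec_zero _⟩
    | add _ _ _ _ hx hy =>
      obtain ⟨w, hw, rfl⟩ := hx
      obtain ⟨w', hw', rfl⟩ := hy
      exact ⟨w + w', fun i hi => by simp [hw i hi, hw' i hi], mulVec_add _ _ _⟩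
    | smul a _ _ hx =>
      obtain ⟨w, hw, rfl⟩ := hx
      exact ⟨a • w, fun i hi => by simp [hw i hi], mulVec_smul _ _ _⟩
  refine (hA.dotProduct_mulVec_zero_iff w).mp (Finset.sum_eq_zero fun i _ => ?_)
  by_cases hi : i ∈ s
  · simp [hs i hi]
  · simp [hws i hi]

section Hankel

variable (β : ℕ → ℝ) (a : ℕ) {m n : ℕ}

theorem col_Hmat : (Hmat β a m).col = fun j : Fin (m + 1) => Hcol β a m j := by
  funext j ℓ
  simp only [col_apply, Hmat, Hcol, of_apply, Nat.add_right_comm]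

theorem image_Hcol_Iio (h : m ≤ n + 1) :
    Hcol β a n '' Iio m = (Hmat β a n).col '' {j | (j : ℕ) < m} := by
  ext x
  constructor
  · rintro ⟨j, hj, rfl⟩
    exact ⟨⟨j, by simp only [mem_Iio] at hj; omega⟩, hj, by rw [col_Hmat]⟩
  · rintro ⟨j, hj, rfl⟩
    exact ⟨j, hj, by rw [col_Hmat]⟩

theorem rank_Hmat :
    (Hmat β a m).rank = Module.finrank ℝ (span ℝ (Hcol β a m '' Iio (m + 1))) := by
  rw [rank_eq_finrank_span_cols, ← range_fin_eq_image_Iio, col_Hmat]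

theorem linearIndependent_Hcol_iff_isUnit_det :
    LinearIndependent ℝ (fun j : Fin (m + 1) => Hcol β a m j) ↔ IsUnit (Hmat β a m).det := by
  rw [← Matrix.isUnit_iff_isUnit_det, ← linearIndependent_cols_iff_isUnit, col_Hmat]

theorem funLeft_succ_Hcol (h : n + 1 ≤ n + 1 + 1) (i : ℕ) :
    funLeft ℝ ℝ Fin.succ (Hcol β a (n + 1) i) =
      funLeft ℝ ℝ (Fin.castLE h) (Hcol β a (n + 1) (i + 1)) := by
  funext ℓ
  simp only [funLeft_apply, Hcol, Fin.val_succ, Fin.val_castLE]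
  congr 1
  omega

theorem disjoint_span_Hcol_ker_funLeft (hA : (Hmat β a n).PosSemidef) (h : m + 1 ≤ n + 1) :
    Disjoint (span ℝ (Hcol β a n '' Iio (m + 1))) (ker (funLeft ℝ ℝ (Fin.castLE h))) := by
  refine disjoint_def.mpr fun x hx hker => hA.eq_zero_of_mem_span_col
    (image_Hcol_Iio β a h ▸ hx) fun ℓ hℓ => ?_
  simpa using congrFun (mem_ker.mp hker) ⟨ℓ, hℓ⟩

theorem Hmat_eq_submatrix_rev {N : ℕ} (h : a + 2 * m = N) :
    Hmat β a m = (Hmat (fun i => β (N - i)) 0 m).submatrix Fin.revPerm Fin.revPerm := by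
  ext i j
  simp only [Hmat, of_apply, submatrix_apply, Fin.revPerm_apply, Fin.val_rev]
  congr 1
  omega

theorem isLeast_seqRank (hsing : ¬ IsUnit (Hmat β a m).det) :
    IsLeast (dependentIndices ℝ (Hcol β a m)) (seqRank β a m) ∧ seqRank β a m < m + 1 := by
  rw [seqRank, if_neg hsing]
  exact isLeast_sInf_dependentIndices ((linearIndependent_Hcol_iff_isUnit_det β a).not.mpr hsing)

theorem seqRank_eq_of_isLeast {r : ℕ} (hr : IsLeast (dependentIndices ℝ (Hcol β a m)) r)
    (hrm : r < m + 1) : seqRank β a m = r := by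
  have hsing : ¬ IsUnit (Hmat β a m).det := by
    rw [← linearIndependent_Hcol_iff_isUnit_det, linearIndependent_fin_iff_forall_lt_notMem]
    exact fun h => h r hrm hr.1
  rw [seqRank, if_neg hsing]
  exact hr.csInf_eq

end Hankel

section RankChain

variable {γ : ℕ → ℝ} {a n m : ℕ}

theorem span_Hcol_Iio_eq_of_seqRank_le (hA : (Hmat γ a (n + 1)).PosSemidef)
    (hsing : ¬ IsUnit (Hmat γ a (n + 1)).det) (hrm : seqRank γ a (n + 1) ≤ m + 1) (hm : m ≤ n) :
    span ℝ (Hcol γ a (n + 1) '' Iio (m + 1)) =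
      span ℝ (Hcol γ a (n + 1) '' Iio (seqRank γ a (n + 1))) := by
  refine le_antisymm (span_le.mpr ?_) (span_mono (image_mono (Iio_subset_Iio hrm)))
  rintro _ ⟨j, hj, rfl⟩
  by_cases hjr : j < seqRank γ a (n + 1)
  · exact subset_span ⟨j, hjr, rfl⟩
  · have hle : n + 1 ≤ n + 1 + 1 := Nat.le_succ _
    exact mem_span_image_Iio_of_shift (funLeft_succ_Hcol γ a hle)
      (disjoint_span_Hcol_ker_funLeft γ a hA hle) (isLeast_seqRank γ a hsing).1.1 j
      (not_lt.mp hjr) (by simp only [mem_Iio] at hj; omega)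

theorem linearIndependent_Hcol_of_seqRank_le (hA : (Hmat γ a (n + 1)).PosSemidef)
    (hsing : ¬ IsUnit (Hmat γ a (n + 1)).det) (hrm : seqRank γ a (n + 1) ≤ m + 1)
    (hm : m ≤ n + 1) :
    LinearIndependent ℝ (fun i : Fin (seqRank γ a (n + 1)) => Hcol γ a m i) := by
  have hle : m + 1 ≤ n + 1 + 1 := by omega
  have hli : LinearIndependent ℝ (fun i : Fin (seqRank γ a (n + 1)) => Hcol γ a (n + 1) i) :=
    linearIndependent_fin_iff_forall_lt_notMem.mpr fun i hi hdep =>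
      (isLeast_seqRank γ a hsing).1.2 hdep |>.not_gt hi
  refine hli.map (f := funLeft ℝ ℝ (Fin.castLE hle)) ?_
  rw [range_fin_eq_image_Iio]
  exact (disjoint_span_Hcol_ker_funLeft γ a hA hle).mono_left
    (span_mono (image_mono (Iio_subset_Iio hrm)))

theorem rank_Hmat_of_seqRank_le (hA : (Hmat γ a (n + 1)).PosSemidef)
    (hsing : ¬ IsUnit (Hmat γ a (n + 1)).det) (hrm : seqRank γ a (n + 1) ≤ m + 1) (hm : m ≤ n) :
    (Hmat γ a m).rank = seqRank γ a (n + 1) := by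
  have hle : m + 1 ≤ n + 1 + 1 := by omega
  have hcol : Hcol γ a m = funLeft ℝ ℝ (Fin.castLE hle) ∘ Hcol γ a (n + 1) := rfl
  have hspan : span ℝ (Hcol γ a m '' Iio (m + 1)) =
      span ℝ (range fun i : Fin (seqRank γ a (n + 1)) => Hcol γ a m i) := by
    rw [range_fin_eq_image_Iio, hcol, image_comp, image_comp, span_image, span_image,
      span_Hcol_Iio_eq_of_seqRank_le hA hsing hrm hm]
  rw [rank_Hmat, hspan, finrank_span_eq_card
    (linearIndependent_Hcol_of_seqRank_le hA hsing hrm (hm.trans n.le_succ)), Fintype.card_fin]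

theorem seqRank_eq_seqRank_succ (hA : (Hmat γ a (n + 1)).PosSemidef)
    (hsing : ¬ IsUnit (Hmat γ a (n + 1)).det) : seqRank γ a n = seqRank γ a (n + 1) := by
  obtain ⟨hleast, hlt⟩ := isLeast_seqRank γ a hsing
  have hle : n + 1 ≤ n + 1 + 1 := Nat.le_succ _
  have hli := linearIndependent_Hcol_of_seqRank_le hA hsing (Nat.lt_succ_iff.mp hlt) n.le_succ
  have hcol : Hcol γ a n = funLeft ℝ ℝ (Fin.castLE hle) ∘ Hcol γ a (n + 1) := rfl
  rcases (Nat.lt_succ_iff.mp hlt).lt_or_eq with hrn | hrn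
  · refine seqRank_eq_of_isLeast γ a ⟨?_, fun i hi => ?_⟩ hrn
    · rw [hcol]
      exact mem_dependentIndices_comp _ hleast.1
    rw [hcol] at hi
    by_contra! hir
    exact linearIndependent_fin_iff_forall_lt_notMem.mp hli i hir hi
  · rw [hrn] at hli ⊢
    rw [seqRank, if_pos ((linearIndependent_Hcol_iff_isUnit_det γ a).mp hli)]

end RankChain

/-- Reversed-sequence rank chain: if the Hankel matrix of `(β 0, …, β (2k))` is psd and
singular, and `r = rank (β (2k), …, β 2)`, then `r = rank β^{(rev)}` and equals the ranks of
the lower right-hand corners `A_β[r-1], …, A_β[k-1]` and of `A_{β̃^{(rev)}}`. -/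
theorem rank_chain_reversed (k : ℕ) (hk : 1 ≤ k) (β : ℕ → ℝ)
    (hpsd : (Hmat β 0 k).PosSemidef) (hsing : ¬ IsUnit (Hmat β 0 k).det) :
    seqRank (fun m => β (2 * k - m)) 0 k = seqRank (fun m => β (2 * k - m)) 0 (k - 1) ∧
    (∀ m : ℕ, seqRank (fun m' => β (2 * k - m')) 0 (k - 1) - 1 ≤ m → m ≤ k - 1 →
      (Hmat β (2 * (k - m)) m).rank = seqRank (fun m' => β (2 * k - m')) 0 (k - 1)) ∧
    (Hmat (fun m => β (2 * k - m)) 0 (k - 1)).rank =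
      seqRank (fun m => β (2 * k - m)) 0 (k - 1) := by
  obtain ⟨n, rfl⟩ : ∃ n, k = n + 1 := ⟨k - 1, by omega⟩
  set γ := fun m => β (2 * (n + 1) - m)
  show seqRank γ 0 (n + 1) = seqRank γ 0 n ∧
    (∀ m, seqRank γ 0 n - 1 ≤ m → m ≤ n →
      (Hmat β (2 * (n + 1 - m)) m).rank = seqRank γ 0 n) ∧
    (Hmat γ 0 n).rank = seqRank γ 0 n
  have hrev : Hmat β 0 (n + 1) = (Hmat γ 0 (n + 1)).submatrix Fin.revPerm Fin.revPerm :=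
    Hmat_eq_submatrix_rev β 0 (by ring)
  rw [hrev, posSemidef_submatrix_equiv] at hpsd
  rw [hrev, det_submatrix_equiv_self] at hsing
  have hrn := Nat.lt_succ_iff.mp (isLeast_seqRank γ 0 hsing).2
  rw [seqRank_eq_seqRank_succ hpsd hsing]
  refine ⟨rfl, fun m hrm hm => ?_, rank_Hmat_of_seqRank_le hpsd hsing hrn le_rfl⟩
  rw [Hmat_eq_submatrix_rev β _ (N := 2 * (n + 1)) (by omega), rank_submatrix]
  exact rank_Hmat_of_seqRank_le (γ := γ) hpsd hsing (by omega) hm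
end
end
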